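/- arXiv:2102.04826 — 7 statements merged into one kernel-verified Lean document; each statement's English description precedes it below -/
import Mathlib

section
/- Let A and B be two nonzero polynomials over a finite field F_q with B(0) ≠ 0, and let α be chosen uniformly at random from an extension field F_{q^s}. Then the polynomials A(αX) and B(X) are coprime with probability at least 1 − deg(A)·deg(B)/q^s. -/
/-!
If `α` is bad, i.e. `A(αX)` and `B` are not coprime, they have a common root `β` in an algebraic
closure, and `β ≠ 0` because `B(0) ≠ 0`. Then `(αβ, β)` is a pair of roots of `A` and `B`, from
which `α = αβ / β` is recovered; so there are at most `deg A · deg B` bad values of `α`.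
-/

open Polynomial

section

variable {K : Type*} [Field K]

theorem encard_rootSet_le_natDegree (p : K[X]) (L : Type*) [Field L] [Algebra K L] :
    (p.rootSet L).encard ≤ p.natDegree := by
  rw [← (p.rootSet_finite L).cast_ncard_eq]
  exact_mod_cast p.ncard_rootSet_le L

theorem encard_setOf_not_isCoprime_comp_C_mul_X_le {A B : K[X]} (hA : A ≠ 0)
    (hB0 : B.eval 0 ≠ 0) :
    {α : K | ¬IsCoprime (A.comp (C α * X)) B}.encard ≤ A.natDegree * B.natDegree := by
  let L := AlgebraicClosure K
  have hB : B ≠ 0 := by rintro rfl; simp at hB0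
  have common_root : ∀ α, ¬IsCoprime (A.comp (C α * X)) B →
      ∃ β : L, aeval β (A.comp (C α * X)) = 0 ∧ aeval β B = 0 := by
    intro α hα
    rw [isCoprime_iff_aeval_ne_zero_of_isAlgClosed K L] at hα
    push Not at hα
    exact hα
  choose! β hβ using common_root
  have hβ0 : ∀ α, ¬IsCoprime (A.comp (C α * X)) B → β α ≠ 0 := by
    intro α hα h0
    have := (hβ α hα).2
    rw [h0, aeval_def, eval₂_at_zero, map_eq_zero, coeff_zero_eq_eval_zero] at this
    exact hB0 this
  calc _ ≤ (A.rootSet L ×ˢ B.rootSet L).encard := by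
        refine Set.encard_le_encard_of_injOn (f := fun α ↦ (algebraMap K L α * β α, β α)) ?_ ?_
        · intro α hα
          obtain ⟨hAβ, hBβ⟩ := hβ α hα
          rw [aeval_comp] at hAβ
          simp only [Set.mem_prod, mem_rootSet_of_ne hA, mem_rootSet_of_ne hB]
          exact ⟨by simpa using hAβ, hBβ⟩
        · intro a _ b hb hab
          simp only [Prod.mk.injEq] at hab
          rw [hab.2] at hab
          exact (algebraMap K L).injective (mul_right_cancel₀ (hβ0 b hb) hab.1)
    _ = (A.rootSet L).encard * (B.rootSet L).encard := Set.encard_prod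
    _ ≤ _ := mul_le_mul' (encard_rootSet_le_natDegree A L) (encard_rootSet_le_natDegree B L)

theorem card_le_card_isCoprime_comp_C_mul_X_add [Finite K] {A B : K[X]} (hA : A ≠ 0)
    (hB0 : B.eval 0 ≠ 0) :
    Nat.card K ≤ Nat.card {α : K // IsCoprime (A.comp (C α * X)) B} +
      A.natDegree * B.natDegree := by
  have hbad := encard_setOf_not_isCoprime_comp_C_mul_X_le hA hB0
  rw [← Set.toFinite _ |>.cast_ncard_eq] at hbad
  rw [← Set.ncard_add_ncard_compl {α : K | IsCoprime (A.comp (C α * X)) B}, Set.compl_ofPred]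
  exact Nat.add_le_add_left (by exact_mod_cast hbad) _

end

theorem stmt0_general {Fq Fqs : Type*} [Field Fq] [Field Fqs] [Fintype Fqs]
    [Algebra Fq Fqs] (A B : Fq[X]) (hA : A ≠ 0) (hB0 : B.eval 0 ≠ 0) :
    1 - (A.natDegree * B.natDegree : ℝ) / (Fintype.card Fqs) ≤
      (Nat.card {α : Fqs // IsCoprime ((A.map (algebraMap Fq Fqs)).comp (C α * X))
          (B.map (algebraMap Fq Fqs))} : ℝ) / (Fintype.card Fqs) := by
  have hA' : A.map (algebraMap Fq Fqs) ≠ 0 := Polynomial.map_ne_zero hA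
  have hB0' : (B.map (algebraMap Fq Fqs)).eval 0 ≠ 0 := by
    rwa [eval_zero_map, ne_eq, FaithfulSMul.algebraMap_eq_zero_iff]
  have key := card_le_card_isCoprime_comp_C_mul_X_add hA' hB0'
  rw [natDegree_map, natDegree_map, Nat.card_eq_fintype_card] at key
  have hq : (0 : ℝ) < Fintype.card Fqs := by exact_mod_cast Fintype.card_pos
  rw [sub_le_iff_le_add, ← add_div, le_div_iff₀ hq, one_mul]
  exact_mod_cast key

theorem stmt0 {Fq Fqs : Type*} [Field Fq] [Fintype Fq] [Field Fqs] [Fintype Fqs]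
    [Algebra Fq Fqs] (A B : Fq[X]) (hA : A ≠ 0) (hB : B ≠ 0) (hB0 : B.eval 0 ≠ 0) :
    1 - (A.natDegree * B.natDegree : ℝ) / (Fintype.card Fqs) ≤
      (Nat.card {α : Fqs // IsCoprime ((A.map (algebraMap Fq Fqs)).comp (C α * X))
          (B.map (algebraMap Fq Fqs))} : ℝ) / (Fintype.card Fqs) :=
  stmt0_general A B hA hB0
end

section
/- Let G be a polynomial over a field K of degree m with G = 1 − X^k·G₁ where G₁ has degree m − k and k ≥ 1. Then for all t ≥ 1, the power series inverse of G truncated modulo X^{kt} has at most binomial(#G + t − 2, t − 1) nonzero monomials, which is at most (#G + t − 2)^{t−1}/(t−1)!. -/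
/-!
Since `G = 1 - H` with `X ^ k ∣ H`, the inverse of `G` agrees with the geometric sum
`∑_{i<t} H ^ i` modulo `X ^ (k t)`. Every exponent occurring in `H ^ i` is a sum of `i` exponents
of `H`; padding with the exponent `0` of `G`, every exponent of the truncation is the sum of a
multiset of `t - 1` elements of the support of `G`, and stars and bars counts these multisets.
-/

open Polynomial
open scoped Pointwise

namespace Finset

theorem card_nsmul_le_choose {α : Type*} [DecidableEq α] [AddCommMonoid α]
    (s : Finset α) (n : ℕ) : #(n • s) ≤ (#s + n - 1).choose n := by
  calc #(n • s)
      ≤ #((univ : Finset (Sym s n)).image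
          fun x : Sym s n ↦ ((x : Multiset s).map Subtype.val).sum) := by
        refine card_le_card fun a ha ↦ ?_
        obtain ⟨f, rfl⟩ := mem_nsmul.1 ha
        refine mem_image.2 ⟨⟨List.ofFn f, by simp⟩, mem_univ _, ?_⟩
        simp [List.map_ofFn, Function.comp_def]
    _ ≤ (#s + n - 1).choose n := by
        grw [card_image_le, card_univ, Sym.card_sym_eq_choose, Fintype.card_coe]

end Finset

namespace Polynomial

section Semiring

variable {R : Type*} [Semiring R]

theorem support_mul_subset_add (p q : R[X]) : (p * q).support ⊆ p.support + q.support := by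
  classical
  rw [← support_toFinsupp, toFinsupp_mul]
  exact AddMonoidAlgebra.support_coeff_mul_subset _ _

theorem support_pow_subset_nsmul (p : R[X]) : ∀ n : ℕ, (p ^ n).support ⊆ n • p.support
  | 0 => by
    rw [pow_zero, zero_nsmul, ← C_1]
    exact support_C_subset 1
  | n + 1 => by
    rw [pow_succ, succ_nsmul]
    exact (support_mul_subset_add _ _).trans
      (Finset.add_subset_add_right (support_pow_subset_nsmul p n))

theorem support_geom_sum_subset (p : R[X]) (t : ℕ) :
    (∑ i ∈ Finset.range t, p ^ i).support ⊆ (t - 1) • insert 0 p.support :=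
  Finset.sum_induction _ (fun q : R[X] ↦ q.support ⊆ (t - 1) • insert 0 p.support)
    (fun _ _ hq hr ↦ support_add.trans (Finset.union_subset hq hr)) (by simp)
    fun i hi ↦ (support_pow_subset_nsmul p i).trans <|
      Finset.nsmul_subset_nsmul (Finset.subset_insert _ _) (Finset.mem_insert_self _ _)
        (by rw [Finset.mem_range] at hi; omega)

end Semiring

theorem support_one_sub {R : Type*} [Ring R] [Nontrivial R] {p : R[X]} (hp : p.coeff 0 = 0) :
    (1 - p).support = insert 0 p.support := by
  ext n
  rcases eq_or_ne n 0 with rfl | hn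
  · simp [hp]
  · simp [coeff_one, hn]

theorem coe_geom_sum {R : Type*} [CommSemiring R] (p : R[X]) (t : ℕ) :
    ((∑ i ∈ Finset.range t, p ^ i : R[X]) : PowerSeries R) =
      ∑ i ∈ Finset.range t, (p : PowerSeries R) ^ i := by
  rw [← coeToPowerSeries.ringHom_apply, map_sum]
  simp only [map_pow, coeToPowerSeries.ringHom_apply]

end Polynomial

namespace PowerSeries

theorem support_trunc_coe_subset {R : Type*} [Semiring R] (n : ℕ) (p : R[X]) :
    (trunc n (p : R⟦X⟧)).support ⊆ p.support := by
  intro i hi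
  rw [Polynomial.mem_support_iff, coeff_trunc] at hi
  rw [Polynomial.mem_support_iff]
  split_ifs at hi
  · rwa [Polynomial.coeff_coe] at hi
  · exact absurd rfl hi

theorem trunc_inv_one_sub_eq_trunc_geom_sum {K : Type*} [Field K] {h : K⟦X⟧}
    (h1 : constantCoeff h ≠ 1) {n t : ℕ} (hdvd : X ^ n ∣ h ^ t) :
    trunc n (1 - h)⁻¹ = trunc n (∑ i ∈ Finset.range t, h ^ i) := by
  obtain ⟨q, hq⟩ := hdvd
  have hunit : (1 - h) * (1 - h)⁻¹ = 1 :=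
    PowerSeries.mul_inv_cancel _ (by rw [map_sub, map_one]; exact sub_ne_zero.2 h1.symm)
  have hdiff : (1 - h)⁻¹ - ∑ i ∈ Finset.range t, h ^ i = X ^ n * ((1 - h)⁻¹ * q) := by
    linear_combination (∑ i ∈ Finset.range t, h ^ i) * hunit - (1 - h)⁻¹ * mul_neg_geom_sum h t
      + (1 - h)⁻¹ * hq
  rw [← sub_eq_zero, ← trunc_sub, hdiff, trunc_X_pow_self_mul]

end PowerSeries

theorem stmt4_general {K : Type*} [Field K] (G G₁ : K[X]) (k t : ℕ) (hk : 1 ≤ k) (ht : 1 ≤ t)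
    (hG : G = 1 - X ^ k * G₁) :
    (PowerSeries.trunc (k * t) ((G : PowerSeries K)⁻¹)).support.card ≤
      Nat.choose (G.support.card + t - 2) (t - 1) ∧
    (Nat.choose (G.support.card + t - 2) (t - 1) : ℝ) ≤
      ((G.support.card + t - 2 : ℕ) : ℝ) ^ (t - 1) / (Nat.factorial (t - 1)) := by
  set H : K[X] := X ^ k * G₁
  have hH0 : H.coeff 0 = 0 := by simp [H, coeff_X_pow, Nat.ne_of_lt hk]
  have htrunc : PowerSeries.trunc (k * t) (G : PowerSeries K)⁻¹ =
      PowerSeries.trunc (k * t) (∑ i ∈ Finset.range t, H ^ i : K[X]) := by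
    rw [hG, coe_sub, coe_one, coe_geom_sum]
    refine PowerSeries.trunc_inv_one_sub_eq_trunc_geom_sum ?_ ⟨(G₁ : PowerSeries K) ^ t, ?_⟩
    · rw [← PowerSeries.coeff_zero_eq_constantCoeff_apply, coeff_coe, hH0]
      exact zero_ne_one
    · rw [coe_mul, coe_pow, coe_X, mul_pow, ← pow_mul]
  refine ⟨?_, by simpa using Nat.choose_le_pow_div (α := ℝ) (t - 1) (G.support.card + t - 2)⟩
  calc (PowerSeries.trunc (k * t) (G : PowerSeries K)⁻¹).support.card
      ≤ ((t - 1) • G.support).card := by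
        grw [htrunc, PowerSeries.support_trunc_coe_subset, support_geom_sum_subset,
          hG, support_one_sub hH0]
    _ ≤ (G.support.card + t - 2).choose (t - 1) := by
        grw [Finset.card_nsmul_le_choose]
        rw [show G.support.card + (t - 1) - 1 = G.support.card + t - 2 by omega]

theorem stmt4 {K : Type*} [Field K] (G G₁ : K[X]) (m k t : ℕ) (hk : 1 ≤ k) (ht : 1 ≤ t)
    (hm : G.natDegree = m) (hG : G = 1 - X ^ k * G₁) (hG1 : G₁.natDegree = m - k) :
    (PowerSeries.trunc (k * t) ((G : PowerSeries K)⁻¹)).support.card ≤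
      Nat.choose (G.support.card + t - 2) (t - 1) ∧
    (Nat.choose (G.support.card + t - 2) (t - 1) : ℝ) ≤
      ((G.support.card + t - 2 : ℕ) : ℝ) ^ (t - 1) / (Nat.factorial (t - 1)) :=
  stmt4_general G G₁ k t hk ht hG
end

section
/- Let F and G be polynomials over a field of respective degrees m+n−1 and m, with G = X^m − G₀ where deg(G₀) ≤ m − k for some k ≥ 1. Then the quotient Q of the Euclidean division of F by G satisfies #Q ≤ #F·(#G + ⌈n/k⌉ − 2)^{⌈n/k⌉ − 1}/(⌈n/k⌉ − 1)!. -/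
/-! With `P = ∑_{i ≤ t} (X^m)^i G₀^(t-i)` one has `P * (X^m - G₀) = X^(m(t+1)) - G₀^(t+1)`, hence
`P * F = X^(m(t+1)) * Q + (P * R - G₀^(t+1) * Q)`. Once `(t+1) k ≥ n`, the second summand has degree
below `m(t+1)`, so `Q` is read off the top coefficients of `P * F` and `#Q ≤ #P · #F`. The term
`X^(mi) G₀^(t-i)` has at most `multichoose #G₀ (t-i)` monomials, and these counts sum to
`(t + #G₀).choose t ≤ (t + #G₀)^t / t!`, where `t + 1 = ⌈n/k⌉` and `#G = #G₀ + 1`. -/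

open Finset

namespace Polynomial

section Semiring

variable {R : Type*} [Semiring R]

theorem support_pow_subset_image_sym (p : R[X]) :
    ∀ i, (p ^ i).support ⊆
      univ.image fun s : Sym p.support i => ((s : Multiset p.support).map (↑)).sum
  | 0 => by
    intro x hx
    have hx0 : x = 0 := by
      by_contra h
      simp [coeff_one, h] at hx
    exact mem_image.2 ⟨Sym.nil, mem_univ _, by simp [hx0]⟩
  | i + 1 => by
    intro x hx
    rw [pow_succ', mem_support_iff, coeff_mul] at hx
    obtain ⟨⟨a, b⟩, hab, hne⟩ := exists_ne_zero_of_sum_ne_zero hx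
    obtain ⟨s, -, hs⟩ := mem_image.1
      (support_pow_subset_image_sym p i (mem_support_iff.2 (right_ne_zero_of_mul hne)))
    refine mem_image.2 ⟨Sym.cons ⟨a, mem_support_iff.2 (left_ne_zero_of_mul hne)⟩ s, mem_univ _, ?_⟩
    rw [Sym.coe_cons, Multiset.map_cons, Multiset.sum_cons, hs]
    exact mem_antidiagonal.1 hab

theorem card_support_pow_le (p : R[X]) (i : ℕ) :
    #(p ^ i).support ≤ (#p.support).multichoose i :=
  calc #(p ^ i).support ≤ #(univ : Finset (Sym p.support i)) :=
        (card_le_card (support_pow_subset_image_sym p i)).trans card_image_le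
    _ = (#p.support).multichoose i := by
        rw [card_univ, Sym.card_sym_eq_multichoose, Fintype.card_coe]

theorem card_support_sum_le {ι : Type*} (s : Finset ι) (f : ι → R[X]) :
    #(∑ i ∈ s, f i).support ≤ ∑ i ∈ s, #(f i).support := by
  classical
  refine (card_le_card fun x hx => ?_).trans card_biUnion_le
  rw [mem_support_iff, finsetSum_coeff] at hx
  obtain ⟨i, hi, hne⟩ := exists_ne_zero_of_sum_ne_zero hx
  exact mem_biUnion.2 ⟨i, hi, mem_support_iff.2 hne⟩

theorem card_support_le_of_coeff_eq_coeff_add {p q : R[X]} {d : ℕ}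
    (h : ∀ j, p.coeff j = q.coeff (j + d)) : #p.support ≤ #q.support :=
  card_le_card_of_injOn (· + d) (fun j hj => by simpa [h] using hj) (add_left_injective d).injOn

theorem coeff_X_pow_mul_add_of_natDegree_lt (p : R[X]) {q : R[X]} {d : ℕ} (hq : q.natDegree < d)
    (j : ℕ) : (X ^ d * p + q).coeff (j + d) = p.coeff j := by
  rw [coeff_add, coeff_X_pow_mul, coeff_eq_zero_of_natDegree_lt (p := q) (by omega), add_zero]

variable (m t : ℕ) (g : R[X])

theorem card_support_sum_X_pow_mul_pow_le :
    #(∑ i ∈ range (t + 1), (X ^ m) ^ i * g ^ (t - i)).support ≤ (t + #g.support).choose t :=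
  calc _ ≤ ∑ i ∈ range (t + 1), #((X ^ m) ^ i * g ^ (t - i)).support := card_support_sum_le _ _
    _ ≤ ∑ i ∈ range (t + 1), (#g.support).multichoose (t - i) := by
        refine sum_le_sum fun i _ => card_support_mul_le.trans ?_
        have hX : #((X ^ m) ^ i : R[X]).support ≤ 1 := by
          simpa [← pow_mul] using card_support_C_mul_X_pow_le_one (c := (1 : R)) (n := m * i)
        simpa using Nat.mul_le_mul hX (card_support_pow_le g (t - i))
    _ = (t + #g.support).choose t := by
        rw [Nat.choose_symm_add, ← Nat.sum_range_multichoose,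
          ← sum_range_reflect (fun i => (#g.support).multichoose i)]
        simp

theorem natDegree_sum_X_pow_mul_pow_le {g : R[X]} (hg : g.natDegree ≤ m) :
    (∑ i ∈ range (t + 1), (X ^ m) ^ i * g ^ (t - i)).natDegree ≤ t * m := by
  refine natDegree_sum_le_of_forall_le _ _ fun i hi => ?_
  have hit : i ≤ t := Nat.lt_succ_iff.1 (mem_range.1 hi)
  calc ((X ^ m) ^ i * g ^ (t - i)).natDegree ≤ i * m + (t - i) * m := by
        rw [← pow_mul']
        exact natDegree_mul_le.trans (add_le_add (natDegree_X_pow_le _)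
          (natDegree_pow_le.trans (Nat.mul_le_mul_left _ hg)))
    _ = t * m := by rw [← add_mul, Nat.add_sub_cancel' hit]

end Semiring

section CommRing

variable {R : Type*} [CommRing R]

theorem coeff_divByMonic_X_pow_sub {F g : R[X]} {m k t : ℕ} (hg : g.natDegree + k ≤ m)
    (hk : 0 < k) (hF : F.natDegree < m + (t + 1) * k) (j : ℕ) :
    (F /ₘ (X ^ m - g)).coeff j =
      ((∑ i ∈ range (t + 1), (X ^ m) ^ i * g ^ (t - i)) * F).coeff (j + m * (t + 1)) := by
  nontriviality R
  set P := ∑ i ∈ range (t + 1), (X ^ m) ^ i * g ^ (t - i)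
  set G := X ^ m - g
  set Q := F /ₘ G
  set r := F %ₘ G
  have hgm : g.natDegree < m := by omega
  have hG : G.Monic := monic_X_pow_sub (degree_le_natDegree.trans_lt (WithBot.coe_lt_coe.2 hgm))
  have hGdeg : G.natDegree = m := by
    rw [natDegree_sub_eq_left_of_natDegree_lt (by rwa [natDegree_X_pow]), natDegree_X_pow]
  have hPG : P * G = X ^ (m * (t + 1)) - g ^ (t + 1) := by
    simpa [P, G, pow_mul] using geom_sum₂_mul (X ^ m) g (t + 1)
  have hPF : P * F = X ^ (m * (t + 1)) * Q + (P * r - g ^ (t + 1) * Q) := by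
    have hdiv : r + G * Q = F := modByMonic_add_div F G
    linear_combination (-P) * hdiv + Q * hPG
  have hG1 : G ≠ 1 := fun h => by rw [h, natDegree_one] at hGdeg; omega
  have hr : r.natDegree < m := hGdeg ▸ natDegree_modByMonic_lt F hG hG1
  have hQ : Q.natDegree < (t + 1) * k := by
    rw [natDegree_divByMonic F hG, hGdeg]
    have := Nat.mul_pos (Nat.add_one_pos t) hk
    omega
  have hPr : (P * r).natDegree < m * (t + 1) :=
    calc (P * r).natDegree ≤ t * m + r.natDegree :=
          natDegree_mul_le.trans (add_le_add_left (natDegree_sum_X_pow_mul_pow_le m t hgm.le) _)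
      _ < m * (t + 1) := by linarith
  have hgQ : (g ^ (t + 1) * Q).natDegree < m * (t + 1) :=
    calc (g ^ (t + 1) * Q).natDegree ≤ (t + 1) * g.natDegree + Q.natDegree :=
          natDegree_mul_le.trans (add_le_add_left natDegree_pow_le _)
      _ < m * (t + 1) := by nlinarith
  rw [hPF, coeff_X_pow_mul_add_of_natDegree_lt _
    ((natDegree_sub_le _ _).trans_lt (max_lt hPr hgQ))]

theorem card_support_divByMonic_X_pow_sub_le {F g : R[X]} {m k t : ℕ}
    (hg : g.natDegree + k ≤ m) (hk : 0 < k) (hF : F.natDegree < m + (t + 1) * k) :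
    #(F /ₘ (X ^ m - g)).support ≤ (t + #g.support).choose t * #F.support :=
  calc #(F /ₘ (X ^ m - g)).support
      ≤ #((∑ i ∈ range (t + 1), (X ^ m) ^ i * g ^ (t - i)) * F).support :=
        card_support_le_of_coeff_eq_coeff_add (coeff_divByMonic_X_pow_sub hg hk hF)
    _ ≤ #(∑ i ∈ range (t + 1), (X ^ m) ^ i * g ^ (t - i)).support * #F.support :=
        card_support_mul_le
    _ ≤ (t + #g.support).choose t * #F.support :=
        Nat.mul_le_mul_right _ (card_support_sum_X_pow_mul_pow_le m t g)

theorem card_support_X_pow_sub [Nontrivial R] {g : R[X]} {m : ℕ} (hg : g.natDegree < m) :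
    #(X ^ m - g).support = #g.support + 1 := by
  have hgm : g.coeff m = 0 := coeff_eq_zero_of_natDegree_lt hg
  have hsupp : (X ^ m - g).support = insert m g.support := by
    ext x
    by_cases hx : x = m
    · simp [hx, hgm]
    · simp [coeff_X_pow, hx]
  rw [hsupp, card_insert_of_notMem (notMem_support_iff.2 hgm)]

end CommRing

end Polynomial

open Polynomial

theorem stmt6_general {K : Type*} [Field K] (F G G₀ : K[X]) (m n k : ℕ) (hk : 1 ≤ k)
    (hkm : k ≤ m) (hn : 1 ≤ n) (hF : F.natDegree = m + n - 1)
    (hG : G = X ^ m - G₀) (hG0 : G₀.natDegree ≤ m - k) :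
    ((F /ₘ G).support.card : ℝ) ≤ (F.support.card : ℝ) *
      ((G.support.card : ℝ) + (⌈(n : ℝ) / k⌉₊ : ℝ) - 2) ^ (⌈(n : ℝ) / k⌉₊ - 1) /
      (Nat.factorial (⌈(n : ℝ) / k⌉₊ - 1)) := by
  subst hG
  obtain ⟨t, ht⟩ : ∃ t, ⌈(n : ℝ) / k⌉₊ = t + 1 :=
    Nat.exists_eq_add_one.2 (Nat.ceil_pos.2 (by positivity))
  have hnt : n ≤ (t + 1) * k := by
    have := Nat.le_ceil ((n : ℝ) / k)
    rw [ht, div_le_iff₀ (by positivity)] at this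
    exact_mod_cast this
  have hQ := card_support_divByMonic_X_pow_sub_le (show G₀.natDegree + k ≤ m by omega) hk
    (show F.natDegree < m + (t + 1) * k by omega)
  rw [ht, Nat.add_sub_cancel, card_support_X_pow_sub (by omega)]
  calc ((F /ₘ (X ^ m - G₀)).support.card : ℝ)
      ≤ F.support.card * ((t + G₀.support.card).choose t : ℕ) := by
        exact_mod_cast hQ.trans_eq (mul_comm _ _)
    _ ≤ F.support.card * (((t + G₀.support.card : ℕ) : ℝ) ^ t / t.factorial) := by
        gcongr
        exact Nat.choose_le_pow_div _ _
    _ = _ := by push_cast; ring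

theorem stmt6 {K : Type*} [Field K] (F G G₀ : K[X]) (m n k : ℕ) (hk : 1 ≤ k)
    (hkm : k ≤ m) (hn : 1 ≤ n) (hF : F.natDegree = m + n - 1) (hGdeg : G.natDegree = m)
    (hG : G = X ^ m - G₀) (hG0 : G₀.natDegree ≤ m - k) :
    ((F /ₘ G).support.card : ℝ) ≤ (F.support.card : ℝ) *
      ((G.support.card : ℝ) + (⌈(n : ℝ) / k⌉₊ : ℝ) - 2) ^ (⌈(n : ℝ) / k⌉₊ - 1) /
      (Nat.factorial (⌈(n : ℝ) / k⌉₊ - 1)) :=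
  stmt6_general F G G₀ m n k hk hkm hn hF hG hG0
end

section
/- Let F, G, Q be sparse polynomials over the integers with F = Q·G, and write Q = Σ_{i=1}^{T} q_i X^{e_i} with T nonzero terms. Then the height of Q satisfies ‖Q‖ ≤ (‖G‖ + 1)^{⌈(T−1)/2⌉} · ‖F‖. -/
open Polynomial

/-- The height of an integer polynomial: the maximum absolute value of its
coefficients. -/
def heightZ (P : Polynomial ℤ) : ℕ := P.support.sup fun i => (P.coeff i).natAbs

/-!
Fix a term `q_e X^e` of `Q`. Comparing coefficients of `X^(e + t)` in `F = Q G`, where `t` is the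
trailing degree of `G`, expresses `q_e g_t` through a coefficient of `F` and the `q_i` with `i < e`;
since `|g_t| ≥ 1` this gives `|q_e| ≤ ‖F‖ + ‖G‖ Σ_{i<e} |q_i|`, and this recursion solves to
`|q_e| ≤ ‖F‖ (‖G‖ + 1)^k` with `k` the number of terms of `Q` below `e`. Using the leading
coefficient of `G` instead gives the same bound with `k` the number of terms above `e`, and one of
the two counts is at most `⌈(T - 1) / 2⌉`.
-/

open Finset

section LinearOrder

variable {α : Type*} [LinearOrder α]

lemma filter_lt_insert_of_lt {s : Finset α} {a x : α} (hx : x < a) :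
    {y ∈ insert a s | y < x} = {y ∈ s | y < x} := by
  rw [filter_insert, if_neg (not_lt.mpr hx.le)]

lemma card_filter_lt_add_card_filter_gt {s : Finset α} {x : α} (hx : x ∈ s) :
    #{y ∈ s | y < x} + #{y ∈ s | x < y} + 1 = #s := by
  rw [← card_union_of_disjoint (disjoint_filter.mpr fun _ _ h h' => lt_asymm h h'),
    ← card_erase_add_one hx]
  congr 2
  ext y
  simp only [mem_union, mem_filter, mem_erase]
  grind

lemma min_card_filter_lt_gt_le_ceil {s : Finset α} {x : α} (hx : x ∈ s) :
    min #{y ∈ s | y < x} #{y ∈ s | x < y} ≤ ⌈((#s : ℝ) - 1) / 2⌉₊ := by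
  have hcard := card_filter_lt_add_card_filter_gt hx
  have : (min #{y ∈ s | y < x} #{y ∈ s | x < y} : ℝ) ≤ ((#s : ℝ) - 1) / 2 := by
    rw [← hcard]
    push_cast
    linarith [min_le_left (#{y ∈ s | y < x} : ℝ) #{y ∈ s | x < y},
      min_le_right (#{y ∈ s | y < x} : ℝ) #{y ∈ s | x < y}]
  exact_mod_cast this.trans (Nat.le_ceil _)

variable {R : Type*} [CommRing R] [LinearOrder R] [IsStrictOrderedRing R] {f : α → R} {A B : R}

lemma add_mul_sum_le_mul_pow_card (hB : 0 ≤ B) (s : Finset α)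
    (h : ∀ x ∈ s, f x ≤ A + B * ∑ y ∈ s with y < x, f y) :
    A + B * ∑ x ∈ s, f x ≤ A * (B + 1) ^ #s := by
  induction s using Finset.induction_on_max with
  | empty => simp
  | insert a s ha ih =>
    have has : a ∉ s := fun h => lt_irrefl a (ha a h)
    have hfa : f a ≤ A + B * ∑ y ∈ s, f y := by
      simpa [filter_insert, filter_true_of_mem ha] using h a (mem_insert_self a s)
    have ih := ih fun x hx => by
      simpa only [filter_lt_insert_of_lt (ha x hx)] using h x (mem_insert_of_mem hx)
    rw [sum_insert has, card_insert_of_notMem has, pow_succ]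
    nlinarith

lemma le_mul_pow_card_filter_lt (hB : 0 ≤ B) {s : Finset α}
    (h : ∀ x ∈ s, f x ≤ A + B * ∑ y ∈ s with y < x, f y) {x : α} (hx : x ∈ s) :
    f x ≤ A * (B + 1) ^ #{y ∈ s | y < x} := by
  refine (h x hx).trans (add_mul_sum_le_mul_pow_card hB _ fun y hy => ?_)
  rw [mem_filter] at hy
  rw [filter_filter, filter_congr fun z _ => and_iff_right_of_imp fun hz => lt_trans hz hy.2]
  exact h y hy.1

end LinearOrder

lemma abs_coeff_le_heightZ (P : ℤ[X]) (n : ℕ) : |P.coeff n| ≤ heightZ P := by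
  by_cases hn : n ∈ P.support
  · rw [Int.abs_eq_natAbs]
    exact_mod_cast le_sup (f := fun i => (P.coeff i).natAbs) hn
  · simp [notMem_support_iff.mp hn]

lemma abs_le_abs_mul_of_ne_zero {a b : ℤ} (hb : b ≠ 0) : |a| ≤ |a * b| := by
  rw [abs_mul]
  exact le_mul_of_one_le_right (abs_nonneg a) (Int.one_le_abs hb)

variable {Q G : ℤ[X]}

lemma abs_coeff_mul_coeff_le {e d : ℕ} (s : Finset ℕ)
    (hs : ∀ i ≤ e + d, i ≠ e → Q.coeff i * G.coeff (e + d - i) ≠ 0 → i ∈ s) :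
    |Q.coeff e * G.coeff d| ≤ heightZ (Q * G) + heightZ G * ∑ i ∈ s, |Q.coeff i| := by
  set n := e + d
  set r := (range (n + 1)).erase e
  have hcoeff :
      (Q * G).coeff n = Q.coeff e * G.coeff d + ∑ i ∈ r, Q.coeff i * G.coeff (n - i) := by
    rw [coeff_mul, Nat.sum_antidiagonal_eq_sum_range_succ_mk,
      ← add_sum_erase _ _ (mem_range.2 (by omega : e < n + 1)), Nat.add_sub_cancel_left]
  have hrest : |∑ i ∈ r, Q.coeff i * G.coeff (n - i)| ≤ heightZ G * ∑ i ∈ s, |Q.coeff i| :=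
    calc |∑ i ∈ r, Q.coeff i * G.coeff (n - i)|
        ≤ ∑ i ∈ r, |Q.coeff i * G.coeff (n - i)| := abs_sum_le_sum_abs _ _
      _ = ∑ i ∈ r with i ∈ s, |Q.coeff i * G.coeff (n - i)| := by
        refine (sum_filter_of_ne fun i hi hne => ?_).symm
        obtain ⟨hie, hi⟩ := mem_erase.1 hi
        exact hs i (Nat.lt_succ_iff.1 (mem_range.1 hi)) hie (abs_ne_zero.1 hne)
      _ ≤ ∑ i ∈ s, |Q.coeff i * G.coeff (n - i)| :=
        sum_le_sum_of_subset_of_nonneg (fun _ hi => (mem_filter.1 hi).2)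
          fun _ _ _ => abs_nonneg _
      _ ≤ ∑ i ∈ s, |Q.coeff i| * heightZ G := by
        gcongr with i
        rw [abs_mul]
        exact mul_le_mul_of_nonneg_left (abs_coeff_le_heightZ G _) (abs_nonneg _)
      _ = heightZ G * ∑ i ∈ s, |Q.coeff i| := by rw [mul_sum]; simp_rw [mul_comm]
  calc |Q.coeff e * G.coeff d|
      = |(Q * G).coeff n - ∑ i ∈ r, Q.coeff i * G.coeff (n - i)| := by
        rw [hcoeff, add_sub_cancel_right]
    _ ≤ |(Q * G).coeff n| + |∑ i ∈ r, Q.coeff i * G.coeff (n - i)| := abs_sub _ _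
    _ ≤ _ := add_le_add (abs_coeff_le_heightZ _ _) hrest

lemma abs_coeff_le_add_mul_sum_lt (hG : G ≠ 0) (e : ℕ) :
    |Q.coeff e| ≤ heightZ (Q * G) + heightZ G * ∑ i ∈ Q.support with i < e, |Q.coeff i| := by
  refine (abs_le_abs_mul_of_ne_zero (trailingCoeff_nonzero_iff_nonzero.2 hG)).trans
    (abs_coeff_mul_coeff_le _ fun i _ hie hi => ?_)
  refine mem_filter.2 ⟨mem_support_iff.2 (left_ne_zero_of_mul hi), ?_⟩
  by_contra! hei
  exact right_ne_zero_of_mul hi (coeff_eq_zero_of_lt_natTrailingDegree (by omega))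

lemma abs_coeff_le_add_mul_sum_gt (hG : G ≠ 0) (e : ℕ) :
    |Q.coeff e| ≤ heightZ (Q * G) + heightZ G * ∑ i ∈ Q.support with e < i, |Q.coeff i| := by
  refine (abs_le_abs_mul_of_ne_zero (leadingCoeff_ne_zero.2 hG)).trans
    (abs_coeff_mul_coeff_le _ fun i _ hie hi => ?_)
  refine mem_filter.2 ⟨mem_support_iff.2 (left_ne_zero_of_mul hi), ?_⟩
  by_contra! hei
  exact right_ne_zero_of_mul hi (coeff_eq_zero_of_natDegree_lt (by omega))

lemma abs_coeff_le_mul_pow_min (hG : G ≠ 0) {e : ℕ} (he : e ∈ Q.support) :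
    |Q.coeff e| ≤ heightZ (Q * G) *
      (heightZ G + 1) ^ min #{i ∈ Q.support | i < e} #{i ∈ Q.support | e < i} := by
  have hB : (0 : ℤ) ≤ heightZ G := Nat.cast_nonneg _
  rcases le_total #{i ∈ Q.support | i < e} #{i ∈ Q.support | e < i} with hlo | hhi
  · rw [min_eq_left hlo]
    exact le_mul_pow_card_filter_lt (f := fun i => |Q.coeff i|) hB
      (fun x _ => abs_coeff_le_add_mul_sum_lt hG x) he
  · rw [min_eq_right hhi]
    -- in `ℕᵒᵈ` the terms above `e` become the terms below it
    exact le_mul_pow_card_filter_lt (α := ℕᵒᵈ) (s := Q.support)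
      (f := fun i => |Q.coeff (OrderDual.ofDual i)|) hB
      (fun x _ => abs_coeff_le_add_mul_sum_gt hG x) he

theorem stmt13 (F G Q : Polynomial ℤ) (hG : G ≠ 0) (hFQ : F = Q * G) :
    (heightZ Q : ℝ) ≤
      ((heightZ G : ℝ) + 1) ^ (⌈((Q.support.card : ℝ) - 1) / 2⌉₊) * (heightZ F) := by
  subst hFQ
  suffices heightZ Q ≤ (heightZ G + 1) ^ ⌈((#Q.support : ℝ) - 1) / 2⌉₊ * heightZ (Q * G) by
    exact_mod_cast this
  refine Finset.sup_le fun e he => ?_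
  zify
  calc |Q.coeff e|
      ≤ heightZ (Q * G) *
          (heightZ G + 1) ^ min #{i ∈ Q.support | i < e} #{i ∈ Q.support | e < i} :=
        abs_coeff_le_mul_pow_min hG he
    _ ≤ heightZ (Q * G) * (heightZ G + 1) ^ ⌈((#Q.support : ℝ) - 1) / 2⌉₊ := by
        gcongr
        · omega
        · exact min_card_filter_lt_gt_le_ceil he
    _ = _ := mul_comm _ _
end

section
/- Let F, G ∈ ℤ[X] with G ≠ 0 and leading coefficient of G dividing all intermediate leading coefficients so that the Euclidean division stays integral (e.g., G monic). In the Euclidean division remainder sequence R_i = R_{i−1} − q_i X^{e_i} G (with R_0 = F), each remainder satisfies ‖R_i‖ ≤ ‖F‖·(1 + ‖G‖)^i. -/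
open Polynomial

lemma natAbs_coeff_le_heightZ (P : ℤ[X]) (n : ℕ) : (P.coeff n).natAbs ≤ heightZ P := by
  by_cases hn : n ∈ P.support
  · exact Finset.le_sup (f := fun i => (P.coeff i).natAbs) hn
  · simp [notMem_support_iff.mp hn]

lemma heightZ_le_of_forall_natAbs_coeff_le {P : ℤ[X]} {B : ℕ}
    (h : ∀ n, (P.coeff n).natAbs ≤ B) : heightZ P ≤ B :=
  Finset.sup_le fun n _ => h n

lemma heightZ_sub_le (P Q : ℤ[X]) : heightZ (P - Q) ≤ heightZ P + heightZ Q :=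
  heightZ_le_of_forall_natAbs_coeff_le fun n => by
    rw [coeff_sub]
    exact (Int.natAbs_sub_le _ _).trans
      (add_le_add (natAbs_coeff_le_heightZ P n) (natAbs_coeff_le_heightZ Q n))

lemma heightZ_C_mul_X_pow_mul_le (q : ℤ) (e : ℕ) (G : ℤ[X]) :
    heightZ (C q * X ^ e * G) ≤ q.natAbs * heightZ G :=
  heightZ_le_of_forall_natAbs_coeff_le fun n => by
    rw [mul_assoc, coeff_C_mul, coeff_X_pow_mul', Int.natAbs_mul]
    split_ifs
    · exact Nat.mul_le_mul_left _ (natAbs_coeff_le_heightZ G _)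
    · simp

lemma heightZ_sub_C_leadingCoeff_mul_X_pow_mul_le (P G : ℤ[X]) (e : ℕ) :
    heightZ (P - C P.leadingCoeff * X ^ e * G) ≤ heightZ P * (1 + heightZ G) :=
  calc heightZ (P - C P.leadingCoeff * X ^ e * G)
      ≤ heightZ P + P.leadingCoeff.natAbs * heightZ G :=
        (heightZ_sub_le _ _).trans (Nat.add_le_add_left (heightZ_C_mul_X_pow_mul_le _ _ _) _)
    _ ≤ heightZ P + heightZ P * heightZ G := by
        gcongr
        exact natAbs_coeff_le_heightZ P _
    _ = heightZ P * (1 + heightZ G) := by ring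

theorem stmt14_general (F G : Polynomial ℤ) (R : ℕ → Polynomial ℤ)
    (h0 : R 0 = F)
    (hstep : ∀ i, ∃ e : ℕ,
      R (i + 1) = R i - Polynomial.C ((R i).leadingCoeff) * X ^ e * G) :
    ∀ i, (heightZ (R i) : ℝ) ≤ (heightZ F : ℝ) * (1 + (heightZ G : ℝ)) ^ i := by
  intro i
  have hrec : ∀ k, (heightZ (R (k + 1)) : ℝ) ≤ (1 + heightZ G) * heightZ (R k) := by
    intro k
    obtain ⟨e, he⟩ := hstep k
    rw [he, mul_comm (1 + _ : ℝ)]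
    exact_mod_cast heightZ_sub_C_leadingCoeff_mul_X_pow_mul_le (R k) G e
  calc (heightZ (R i) : ℝ) ≤ (1 + (heightZ G : ℝ)) ^ i * heightZ (R 0) :=
        le_geom (u := fun k => (heightZ (R k) : ℝ)) (by positivity) i fun k _ => hrec k
    _ = (heightZ F : ℝ) * (1 + (heightZ G : ℝ)) ^ i := by rw [h0, mul_comm]

theorem stmt14 (F G : Polynomial ℤ) (R : ℕ → Polynomial ℤ) (hG : G.Monic)
    (h0 : R 0 = F)
    (hstep : ∀ i, ∃ e : ℕ,
      R (i + 1) = R i - Polynomial.C ((R i).leadingCoeff) * X ^ e * G) :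
    ∀ i, (heightZ (R i) : ℝ) ≤ (heightZ F : ℝ) * (1 + (heightZ G : ℝ)) ^ i :=
  stmt14_general F G R h0 hstep
end

section
/- Over a field K, for F = X^{m+n−1} − 1 and G = X^m − X^{m−1} + 1 with n ≤ m, the Euclidean quotient of F by G is Σ_{i=0}^{n−1} X^i (hence has n nonzero terms, i.e., is maximally dense). -/
/-!
With `G = X ^ (k + 1) - X ^ k + 1 = X ^ k * (X - 1) + 1` and `Q = ∑ i < n, X ^ i`, the geometric sum
identity `Q * (X - 1) = X ^ n - 1` gives `G * Q = X ^ (k + n) - X ^ k + Q`, so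
`X ^ (k + n) - 1 = G * Q + (X ^ k - 1 - Q)`. For `n ≤ k + 1` the last summand has degree at most `k`,
below `deg G = k + 1`, so it is the remainder and `Q` is the quotient.
-/

open Polynomial Finset

universe u

variable {R : Type u} [CommRing R]

theorem X_pow_mem_degreeLT {i n : ℕ} (h : i < n) : (X ^ i : R[X]) ∈ degreeLT R n := by
  rw [← monomial_one_right_eq_X_pow]
  exact monomial_coe_mem_degreeLT ⟨i, h⟩ 1

theorem monic_X_pow_succ_sub_X_pow_add_one (k : ℕ) :
    (X ^ (k + 1) - X ^ k + 1 : R[X]).Monic := by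
  monicity!

theorem natDegree_X_pow_succ_sub_X_pow_add_one [Nontrivial R] (k : ℕ) :
    (X ^ (k + 1) - X ^ k + 1 : R[X]).natDegree = k + 1 := by
  compute_degree!

theorem X_pow_add_sub_one_eq (k n : ℕ) :
    (X ^ (k + n) - 1 : R[X]) =
      (X ^ k - 1 - ∑ i ∈ range n, X ^ i) + (X ^ (k + 1) - X ^ k + 1) * ∑ i ∈ range n, X ^ i := by
  linear_combination (-X ^ k : R[X]) * geom_sum_mul (X : R[X]) n

theorem X_pow_sub_one_sub_geom_sum_mem_degreeLT {k n : ℕ} (hn : n ≤ k + 1) :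
    (X ^ k - 1 - ∑ i ∈ range n, X ^ i : R[X]) ∈ degreeLT R (k + 1) := by
  refine sub_mem (sub_mem (X_pow_mem_degreeLT k.lt_succ_self) ?_)
    (sum_mem fun i hi => X_pow_mem_degreeLT ((mem_range.1 hi).trans_le hn))
  simpa using X_pow_mem_degreeLT (R := R) k.succ_pos

theorem X_pow_add_sub_one_divByMonic [Nontrivial R] {k n : ℕ} (hn : n ≤ k + 1) :
    (X ^ (k + n) - 1 : R[X]) /ₘ (X ^ (k + 1) - X ^ k + 1) = ∑ i ∈ range n, X ^ i := by
  have hG := monic_X_pow_succ_sub_X_pow_add_one (R := R) k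
  refine (div_modByMonic_unique _ _ hG ⟨(X_pow_add_sub_one_eq k n).symm, ?_⟩).1
  rw [degree_eq_natDegree hG.ne_zero, natDegree_X_pow_succ_sub_X_pow_add_one]
  exact mem_degreeLT.1 (X_pow_sub_one_sub_geom_sum_mem_degreeLT hn)

theorem stmt16_general {K : Type*} [Field K] (m n : ℕ) (hnm : n ≤ m) :
    (X ^ (m + n - 1) - 1 : K[X]) /ₘ (X ^ m - X ^ (m - 1) + 1) =
      ∑ i ∈ Finset.range n, X ^ i := by
  obtain _ | k := m
  · obtain rfl : n = 0 := by omega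
    simp
  · rw [show k + 1 + n - 1 = k + n by omega, Nat.add_sub_cancel]
    exact X_pow_add_sub_one_divByMonic hnm

theorem stmt16 {K : Type*} [Field K] (m n : ℕ) (hn : 1 ≤ n) (hnm : n ≤ m) :
    (X ^ (m + n - 1) - 1 : K[X]) /ₘ (X ^ m - X ^ (m - 1) + 1) =
      ∑ i ∈ Finset.range n, X ^ i :=
  stmt16_general m n hnm
end

section
/- Let Q be a polynomial over a field with sparsity at most T and let p₁, ..., p_γ be pairwise distinct primes. If a nonzero monomial c·X^e of Q does not collide with any other monomial of Q modulo X^{p_i} − 1 for any i (i.e., e is the unique exponent of supp(Q) congruent to e mod p_i for each i), and ∏ p_i > deg(Q), then e is uniquely determined by its residues e mod p_i via the Chinese Remainder Theorem, and the coefficient of X^{e mod p_i} in Q mod (X^{p_i}−1) equals c for every i. -/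
/-! Reducing modulo `X ^ n - 1` sends `X ^ e` to `X ^ (e % n)`, so the coefficient of `X ^ r` in
`Q %ₘ (X ^ n - 1)` is the sum of the coefficients of `Q` at exponents congruent to `r`. When `e` is
the only exponent of `Q` in its class modulo every `p i`, that sum is the single term `Q.coeff e`.
Two exponents at most `deg Q` with the same residues differ by a multiple of `∏ p i > deg Q`, hence
coincide. -/

open Polynomial Function

theorem Nat.eq_of_forall_modEq_of_lt_prod {ι : Type*} [Fintype ι] {p : ι → ℕ}
    (hp : Pairwise (Nat.Coprime on p)) {a b : ℕ} (ha : a < ∏ i, p i) (hb : b < ∏ i, p i)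
    (h : ∀ i, a ≡ b [MOD p i]) : a = b := by
  have hdvd : ((∏ i, p i : ℕ) : ℤ) ∣ (b : ℤ) - a := by
    rw [Nat.cast_prod]
    exact Fintype.prod_dvd_of_coprime (fun i j hij => Nat.isCoprime_iff_coprime.mpr (hp hij))
      fun i => Nat.modEq_iff_dvd.mp (h i)
  exact (Nat.modEq_iff_dvd.mpr hdvd).eq_of_lt_of_lt ha hb

section ModXPowSubOne

variable {R : Type*} [CommRing R] [Nontrivial R] {n : ℕ}

theorem Polynomial.X_pow_modByMonic_X_pow_sub_one (hn : n ≠ 0) (e : ℕ) :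
    (X ^ e : R[X]) %ₘ (X ^ n - 1) = X ^ (e % n) := by
  have hmonic : (X ^ n - 1 : R[X]).Monic := by simpa using monic_X_pow_sub_C (1 : R) hn
  have hdvd : (X ^ n - 1 : R[X]) ∣ X ^ e - X ^ (e % n) := by
    have hsplit : (X ^ e - X ^ (e % n) : R[X]) = X ^ (e % n) * ((X ^ n) ^ (e / n) - 1) := by
      rw [mul_sub, mul_one, ← pow_mul, ← pow_add, Nat.mod_add_div]
    rw [hsplit]
    exact (sub_one_dvd_pow_sub_one _ _).mul_left _
  rw [modByMonic_eq_of_dvd_sub hmonic hdvd, (modByMonic_eq_self_iff hmonic).mpr]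
  rw [degree_X_pow, show (X ^ n - 1 : R[X]) = X ^ n - C 1 by simp, degree_X_pow_sub_C
    (Nat.pos_of_ne_zero hn)]
  exact_mod_cast Nat.mod_lt e (Nat.pos_of_ne_zero hn)

theorem Polynomial.coeff_modByMonic_X_pow_sub_one (hn : n ≠ 0) (Q : R[X]) (r : ℕ) :
    (Q %ₘ (X ^ n - 1)).coeff r = ∑ e ∈ Q.support with e % n = r, Q.coeff e := by
  have hreduce : Q %ₘ (X ^ n - 1) = ∑ e ∈ Q.support, Q.coeff e • (X : R[X]) ^ (e % n) := by
    conv_lhs => rw [Q.as_sum_support_C_mul_X_pow]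
    simp only [← modByMonicHom_apply, map_sum, ← smul_eq_C_mul, map_smul]
    simp only [modByMonicHom_apply, X_pow_modByMonic_X_pow_sub_one hn]
  simp only [hreduce, finsetSum_coeff, coeff_smul, coeff_X_pow, smul_eq_mul, mul_ite, mul_one,
    mul_zero, Finset.sum_filter, eq_comm]

end ModXPowSubOne

theorem stmt19_general {K : Type*} [Field K] (Q : K[X]) (γ : ℕ) (p : Fin γ → ℕ)
    (hprime : ∀ i, Nat.Prime (p i))
    (hdist : Function.Injective p) (e : ℕ) (he : e ∈ Q.support) (c : K)
    (hc : c = Q.coeff e)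
    (hnocol : ∀ i, ∀ e' ∈ Q.support, e' % p i = e % p i → e' = e)
    (hprod : Q.natDegree < ∏ i, p i) :
    (∀ e' : ℕ, e' ≤ Q.natDegree → (∀ i, e' % p i = e % p i) → e' = e) ∧
    ∀ i, (Q %ₘ (X ^ (p i) - 1)).coeff (e % p i) = c := by
  have hcoprime : Pairwise (Nat.Coprime on p) := fun i j hij =>
    (Nat.coprime_primes (hprime i) (hprime j)).mpr (hdist.ne hij)
  refine ⟨fun e' he' hmod => ?_, fun i => ?_⟩
  · exact Nat.eq_of_forall_modEq_of_lt_prod hcoprime (he'.trans_lt hprod)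
      ((le_natDegree_of_mem_supp e he).trans_lt hprod) hmod
  · have hclass : {e' ∈ Q.support | e' % p i = e % p i} = {e} :=
      Finset.eq_singleton_iff_unique_mem.mpr
        ⟨Finset.mem_filter.mpr ⟨he, rfl⟩, fun e' he' => hnocol i e' (Finset.mem_filter.mp he').1
          (Finset.mem_filter.mp he').2⟩
    rw [coeff_modByMonic_X_pow_sub_one (hprime i).ne_zero, hclass, Finset.sum_singleton, hc]

theorem stmt19 {K : Type*} [Field K] (Q : K[X]) (T γ : ℕ) (p : Fin γ → ℕ)
    (hT : Q.support.card ≤ T) (hprime : ∀ i, Nat.Prime (p i))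
    (hdist : Function.Injective p) (e : ℕ) (he : e ∈ Q.support) (c : K)
    (hc : c = Q.coeff e)
    (hnocol : ∀ i, ∀ e' ∈ Q.support, e' % p i = e % p i → e' = e)
    (hprod : Q.natDegree < ∏ i, p i) :
    (∀ e' : ℕ, e' ≤ Q.natDegree → (∀ i, e' % p i = e % p i) → e' = e) ∧
    ∀ i, (Q %ₘ (X ^ (p i) - 1)).coeff (e % p i) = c :=
  stmt19_general Q γ p hprime hdist e he c hc hnocol hprod
end
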